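/- arXiv:2512.13445 — 4 statements merged into one kernel-verified Lean document; each statement's English description precedes it below -/
import Mathlib

section
/- Let F be a field and 1 < k ≤ n. Then for every n×k matrix X = (x_{i,j}) over F and every fixed column index j with 1 ≤ j ≤ k, the Laplace expansion along the j-th column holds: det_{n,k}(X) = Σ_{i=1}^{n} (-1)^{i+j} x_{i,j} · det_{(n-1),(k-1)}(X(i|j)), where X(i|j) is the (n−1)×(k−1) matrix obtained from X by deleting row i and column j. -/
open Classical in
noncomputable def cullisDet {F : Type*} [Field F] {n k : ℕ}
    (X : Matrix (Fin n) (Fin k) F) : F :=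
  ∑ f : Fin k → Fin n, if StrictMono f then
    (-1 : F) ^ (∑ j : Fin k, ((f j : ℕ) - (j : ℕ))) * (X.submatrix f id).det
  else 0

/-- The strictly increasing embedding `Fin (n-1) → Fin n` skipping `i`;
used to delete a row/column. -/
def skipIdx {n : ℕ} (i : Fin n) (p : Fin (n - 1)) : Fin n :=
  ⟨if (p : ℕ) < (i : ℕ) then (p : ℕ) else (p : ℕ) + 1,
    by have h1 := p.isLt; have h2 := i.isLt; split <;> omega⟩

namespace Stmt16Aux

lemma succAbove_val {n : ℕ} (i : Fin (n+1)) (p : Fin n) :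
    (i.succAbove p : ℕ) = if (p:ℕ) < (i:ℕ) then (p:ℕ) else (p:ℕ)+1 := by
  rw [Fin.succAbove]
  rcases lt_or_ge ((p:ℕ)) ((i:ℕ)) with h | h
  · rw [if_pos (by simpa [Fin.lt_def] using h), if_pos h]; rfl
  · rw [if_neg (by simpa [Fin.lt_def, not_lt] using h), if_neg (not_lt.2 h)]; rfl

lemma sm_le {n m : ℕ} {f : Fin n → Fin m} (hf : StrictMono f) (q : Fin n) :
    (q : ℕ) ≤ (f q : ℕ) := by
  obtain ⟨v, hv⟩ := q
  induction v with
  | zero => exact Nat.zero_le _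
  | succ w ih =>
    have hw : w < n := by omega
    have h1 := ih hw
    have h2 : (⟨w, hw⟩ : Fin n) < ⟨w+1, hv⟩ := by simp [Fin.lt_def]
    have h3 := hf h2
    rw [Fin.lt_def] at h3
    simp only [Fin.val_mk] at h1 h3 ⊢
    omega

lemma card_filter_lt {m c : ℕ} (hc : c ≤ m) :
    (Finset.univ.filter fun p : Fin m => (p:ℕ) < c).card = c := by
  rw [Finset.card_filter, Fin.sum_univ_eq_sum_range (fun v => if v < c then (1:ℕ) else 0),
    ← Finset.card_filter]
  have h : (Finset.range m).filter (fun v => v < c) = Finset.range c := by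
    ext x; simp; omega
  rw [h, Finset.card_range]

end Stmt16Aux

namespace Stmt16Aux

/-- deletion of position `r` from an injective `f`, shifted past `f r`. -/
def delR {l m : ℕ} (f : Fin (m+1) → Fin (l+1)) (r : Fin (m+1))
    (hf : Function.Injective f) (p : Fin m) : Fin l :=
  ⟨if (f (r.succAbove p) : ℕ) < (f r : ℕ) then (f (r.succAbove p) : ℕ)
    else (f (r.succAbove p) : ℕ) - 1, by
    have h1 : f (r.succAbove p) ≠ f r := fun h => Fin.succAbove_ne r p (hf h)
    have h4 : (f (r.succAbove p) : ℕ) ≠ (f r : ℕ) := fun h => h1 (Fin.ext h)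
    have h2 := (f (r.succAbove p)).isLt
    have h3 := (f r).isLt
    split <;> omega⟩

lemma delR_val_ne {l m : ℕ} (f : Fin (m+1) → Fin (l+1)) (r : Fin (m+1))
    (hf : Function.Injective f) (p : Fin m) :
    (f (r.succAbove p) : ℕ) ≠ (f r : ℕ) :=
  fun h => Fin.succAbove_ne r p (hf (Fin.ext h))

/-- P1 : re-inserting recovers the original value. -/
lemma succAbove_delR {l m : ℕ} (f : Fin (m+1) → Fin (l+1)) (r : Fin (m+1))
    (hf : Function.Injective f) (p : Fin m) :
    (f r).succAbove (delR f r hf p) = f (r.succAbove p) := by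
  have h4 := delR_val_ne f r hf p
  apply Fin.ext
  rw [succAbove_val]
  simp only [delR]
  by_cases h : (f (r.succAbove p) : ℕ) < (f r : ℕ)
  · simp only [if_pos h]
  · simp only [if_neg h, if_neg (show ¬((f (r.succAbove p) : ℕ) - 1 < (f r : ℕ)) by omega)]
    omega

/-- P2 : the deletion of a strictly monotone map is strictly monotone. -/
lemma delR_strictMono {l m : ℕ} {f : Fin (m+1) → Fin (l+1)} (r : Fin (m+1))
    (hf : StrictMono f) : StrictMono (delR f r hf.injective) := by
  intro p p' h
  have h1 : f (r.succAbove p) < f (r.succAbove p') :=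
    hf (Fin.succAbove_lt_succAbove_iff.2 h)
  rw [Fin.lt_def] at h1
  have h2 := delR_val_ne f r hf.injective p
  have h3 := delR_val_ne f r hf.injective p'
  simp only [Fin.lt_def, delR]
  split <;> split <;> omega

/-- P3 : weight identity. -/
lemma delR_weight {l m : ℕ} {f : Fin (m+1) → Fin (l+1)} (r : Fin (m+1))
    (hf : StrictMono f) :
    (∑ q : Fin (m+1), ((f q : ℕ) - (q : ℕ))) + (r : ℕ)
      = (∑ p : Fin m, ((delR f r hf.injective p : ℕ) - (p : ℕ))) + (f r : ℕ) := by
  rw [Fin.sum_univ_succAbove (fun q => ((f q : ℕ) - (q : ℕ))) r]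
  have hterm : ∀ p : Fin m,
      ((f (r.succAbove p) : ℕ) - ((r.succAbove p : Fin (m+1)) : ℕ))
        = ((delR f r hf.injective p : ℕ) - (p : ℕ)) := by
    intro p
    have h2 := delR_val_ne f r hf.injective p
    have h5 := sm_le hf (r.succAbove p)
    have h6 := succAbove_val r p
    simp only [delR]
    rcases Nat.lt_or_ge (p : ℕ) (r : ℕ) with hc | hc
    · have h6' : ((r.succAbove p : Fin (m+1)) : ℕ) = (p : ℕ) := by rw [h6, if_pos hc]
      have h8 : (f (r.succAbove p) : ℕ) < (f r : ℕ) := by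
        have h9 : r.succAbove p < r := by rw [Fin.lt_def]; omega
        have := hf h9; rwa [Fin.lt_def] at this
      rw [if_pos h8]; omega
    · have h6' : ((r.succAbove p : Fin (m+1)) : ℕ) = (p : ℕ) + 1 := by
        rw [h6, if_neg (by omega)]
      have h8 : (f r : ℕ) < (f (r.succAbove p) : ℕ) := by
        have h9 : r < r.succAbove p := by rw [Fin.lt_def]; omega
        have := hf h9; rwa [Fin.lt_def] at this
      rw [if_neg (by omega)]; omega
  rw [Finset.sum_congr rfl (fun p _ => hterm p)]
  have := sm_le hf r
  omega

/-- key counting fact for the inverse map. -/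
lemma mem_count_iff {l m : ℕ} {g : Fin m → Fin l} (hg : StrictMono g)
    (i : Fin (l+1)) (p : Fin m) :
    (p : ℕ) < (Finset.univ.filter fun p' : Fin m => (g p' : ℕ) < (i : ℕ)).card
      ↔ (g p : ℕ) < (i : ℕ) := by
  set S := Finset.univ.filter fun p' : Fin m => (g p' : ℕ) < (i : ℕ) with hS
  constructor
  · intro hp
    by_contra hcon
    have hsub : S ⊆ Finset.univ.filter fun p' : Fin m => (p' : ℕ) < (p : ℕ) := by
      intro p' hp'
      rw [hS, Finset.mem_filter] at hp'
      rw [Finset.mem_filter]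
      refine ⟨Finset.mem_univ _, ?_⟩
      have hlt : g p' < g p := by rw [Fin.lt_def]; omega
      have := hg.lt_iff_lt.1 hlt
      rwa [Fin.lt_def] at this
    have hc := Finset.card_le_card hsub
    rw [card_filter_lt (le_of_lt p.isLt)] at hc
    omega
  · intro h
    have hsub : (Finset.univ.filter fun p' : Fin m => (p' : ℕ) < (p : ℕ) + 1) ⊆ S := by
      intro p' hp'
      rw [Finset.mem_filter] at hp'
      rw [hS, Finset.mem_filter]
      refine ⟨Finset.mem_univ _, ?_⟩
      have hle : g p' ≤ g p := by
        apply hg.monotone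
        rw [Fin.le_def]; omega
      rw [Fin.le_def] at hle
      omega
    have hc := Finset.card_le_card hsub
    rw [card_filter_lt (by have := p.isLt; omega)] at hc
    omega

end Stmt16Aux

namespace Stmt16Aux

/-- insertion position -/
def insPos {l m : ℕ} (i : Fin (l+1)) (g : Fin m → Fin l) : Fin (m+1) :=
  ⟨(Finset.univ.filter fun p : Fin m => (g p : ℕ) < (i : ℕ)).card, by
    have h := Finset.card_filter_le Finset.univ (fun p : Fin m => (g p : ℕ) < (i : ℕ))
    simp only [Finset.card_univ, Fintype.card_fin] at h
    omega⟩

/-- insertion map -/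
def insF {l m : ℕ} (i : Fin (l+1)) (g : Fin m → Fin l) : Fin (m+1) → Fin (l+1) :=
  (insPos i g).insertNth i (fun p => i.succAbove (g p))

lemma insF_apply_same {l m : ℕ} (i : Fin (l+1)) (g : Fin m → Fin l) :
    insF i g (insPos i g) = i :=
  Fin.insertNth_apply_same _ _ _

lemma insF_apply_succAbove {l m : ℕ} (i : Fin (l+1)) (g : Fin m → Fin l) (p : Fin m) :
    insF i g ((insPos i g).succAbove p) = i.succAbove (g p) :=
  Fin.insertNth_apply_succAbove _ _ _ _

lemma lt_insPos_iff {l m : ℕ} {g : Fin m → Fin l} (hg : StrictMono g)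
    (i : Fin (l+1)) (p : Fin m) :
    (p : ℕ) < ((insPos i g : Fin (m+1)) : ℕ) ↔ (g p : ℕ) < (i : ℕ) :=
  mem_count_iff hg i p

lemma insF_strictMono {l m : ℕ} {g : Fin m → Fin l} (hg : StrictMono g)
    (i : Fin (l+1)) : StrictMono (insF i g) := by
  set r := insPos i g with hr
  intro a b hab
  rcases eq_or_ne a r with ha | ha <;> rcases eq_or_ne b r with hb | hb
  · exact absurd (ha ▸ hb ▸ hab) (lt_irrefl _)
  · obtain ⟨p, hp⟩ := Fin.exists_succAbove_eq hb
    subst ha; rw [← hp, insF_apply_same, insF_apply_succAbove]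
    have hsv := succAbove_val r p
    have hlt : ¬ ((p : ℕ) < (r : ℕ)) := by
      rw [← hp, Fin.lt_def] at hab
      intro hc; rw [if_pos hc] at hsv; omega
    have hgi : ¬ ((g p : ℕ) < (i : ℕ)) := fun hc => hlt ((lt_insPos_iff hg i p).2 hc)
    rw [Fin.lt_def, succAbove_val]
    rw [if_neg (by omega)]
    omega
  · obtain ⟨p, hp⟩ := Fin.exists_succAbove_eq ha
    subst hb; rw [← hp, insF_apply_same, insF_apply_succAbove]
    have hsv := succAbove_val r p
    have hlt : (p : ℕ) < (r : ℕ) := by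
      rw [← hp, Fin.lt_def] at hab
      by_contra hc; rw [if_neg hc] at hsv; omega
    have hgi : (g p : ℕ) < (i : ℕ) := (lt_insPos_iff hg i p).1 hlt
    rw [Fin.lt_def, succAbove_val, if_pos hgi]
    exact hgi
  · obtain ⟨p, hp⟩ := Fin.exists_succAbove_eq ha
    obtain ⟨p', hp'⟩ := Fin.exists_succAbove_eq hb
    rw [← hp, ← hp', insF_apply_succAbove, insF_apply_succAbove]
    have h1 : p < p' := Fin.succAbove_lt_succAbove_iff.1 (by rw [hp, hp']; exact hab)
    exact Fin.succAbove_lt_succAbove_iff.2 (hg h1)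

lemma delR_insF {l m : ℕ} {g : Fin m → Fin l} (_hg : StrictMono g) (i : Fin (l+1))
    (hinj : Function.Injective (insF i g)) :
    delR (insF i g) (insPos i g) hinj = g := by
  funext p
  apply Fin.ext
  simp only [delR, insF_apply_same, insF_apply_succAbove]
  rw [succAbove_val]
  by_cases h : (g p : ℕ) < (i : ℕ)
  · rw [if_pos h, if_pos h]
  · rw [if_neg h, if_neg (by omega)]
    omega

lemma insPos_delR {l m : ℕ} {f : Fin (m+1) → Fin (l+1)} (hf : StrictMono f)
    (r : Fin (m+1)) :
    insPos (f r) (delR f r hf.injective) = r := by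
  apply Fin.ext
  simp only [insPos]
  have hcong : ∀ p : Fin m,
      ((delR f r hf.injective p : ℕ) < (f r : ℕ)) ↔ ((p : ℕ) < (r : ℕ)) := by
    intro p
    have h6 := succAbove_val r p
    simp only [delR]
    rcases Nat.lt_or_ge (p : ℕ) (r : ℕ) with hc | hc
    · have h8 : (f (r.succAbove p) : ℕ) < (f r : ℕ) := by
        have h9 : r.succAbove p < r := by rw [Fin.lt_def, h6, if_pos hc]; exact hc
        have := hf h9; rwa [Fin.lt_def] at this
      rw [if_pos h8]; omega
    · have h8 : (f r : ℕ) < (f (r.succAbove p) : ℕ) := by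
        have h9 : r < r.succAbove p := by
          rw [Fin.lt_def, h6, if_neg (by omega)]; omega
        have := hf h9; rwa [Fin.lt_def] at this
      rw [if_neg (by omega)]; omega
  have : (Finset.univ.filter fun p : Fin m => (delR f r hf.injective p : ℕ) < (f r : ℕ))
      = Finset.univ.filter fun p : Fin m => (p : ℕ) < (r : ℕ) := by
    apply Finset.filter_congr
    intro p _
    exact hcong p
  rw [this, card_filter_lt (by have := r.isLt; omega)]

lemma insF_delR {l m : ℕ} {f : Fin (m+1) → Fin (l+1)} (hf : StrictMono f)
    (r : Fin (m+1)) :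
    insF (f r) (delR f r hf.injective) = f := by
  funext q
  rw [insF, insPos_delR hf r]
  rcases eq_or_ne q r with hq | hq
  · subst hq; exact Fin.insertNth_apply_same _ _ _
  · obtain ⟨p, hp⟩ := Fin.exists_succAbove_eq hq
    rw [← hp, Fin.insertNth_apply_succAbove, succAbove_delR]

end Stmt16Aux

theorem Stmt16Aux.aux {F : Type*} [Field F] {l m : ℕ}
    (X : Matrix (Fin (l+1)) (Fin (m+1)) F) (j : Fin (m+1)) :
    cullisDet X = ∑ i : Fin (l+1), (-1 : F) ^ ((i : ℕ) + (j : ℕ)) * X i j *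
      cullisDet (fun (p : Fin l) (q : Fin m) =>
        X (i.succAbove p) (j.succAbove q)) := by
  classical
  simp only [cullisDet]
  calc
    (∑ f : Fin (m+1) → Fin (l+1), if StrictMono f then
        (-1 : F) ^ (∑ q : Fin (m+1), ((f q : ℕ) - (q : ℕ))) * (X.submatrix f id).det else 0)
      = ∑ f ∈ Finset.univ.filter fun f : Fin (m+1) → Fin (l+1) => StrictMono f,
          (-1 : F) ^ (∑ q : Fin (m+1), ((f q : ℕ) - (q : ℕ))) * (X.submatrix f id).det := by
        rw [Finset.sum_filter]
    _ = ∑ f ∈ Finset.univ.filter fun f : Fin (m+1) → Fin (l+1) => StrictMono f,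
          ∑ r : Fin (m+1),
          (-1 : F) ^ (∑ q : Fin (m+1), ((f q : ℕ) - (q : ℕ))) *
            ((-1 : F) ^ ((r : ℕ) + (j : ℕ)) * (X.submatrix f id) r j *
              ((X.submatrix f id).submatrix r.succAbove j.succAbove).det) := by
        refine Finset.sum_congr rfl fun f _ => ?_
        rw [Matrix.det_succ_column (X.submatrix f id) j, Finset.mul_sum]
    _ = ∑ fr ∈ (Finset.univ.filter fun f : Fin (m+1) → Fin (l+1) => StrictMono f) ×ˢ
            (Finset.univ : Finset (Fin (m+1))),
          (-1 : F) ^ (∑ q : Fin (m+1), ((fr.1 q : ℕ) - (q : ℕ))) *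
            ((-1 : F) ^ ((fr.2 : ℕ) + (j : ℕ)) * (X.submatrix fr.1 id) fr.2 j *
              ((X.submatrix fr.1 id).submatrix fr.2.succAbove j.succAbove).det) := by
        rw [Finset.sum_product]
    _ = ∑ ig ∈ (Finset.univ : Finset (Fin (l+1))) ×ˢ
            (Finset.univ.filter fun g : Fin m → Fin l => StrictMono g),
          (-1 : F) ^ ((ig.1 : ℕ) + (j : ℕ)) * X ig.1 j *
            ((-1 : F) ^ (∑ q : Fin m, ((ig.2 q : ℕ) - (q : ℕ))) *
              (Matrix.submatrix (fun (p : Fin l) (q : Fin m) =>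
                X (ig.1.succAbove p) (j.succAbove q)) ig.2 id).det) := by
        refine Finset.sum_bij'
          (fun a ha => (a.1 a.2, Stmt16Aux.delR a.1 a.2
            (((Finset.mem_filter.1 (Finset.mem_product.1 ha).1).2 :
              StrictMono a.1).injective)))
          (fun b hb => (Stmt16Aux.insF b.1 b.2, Stmt16Aux.insPos b.1 b.2))
          ?_ ?_ ?_ ?_ ?_
        · rintro ⟨f, r⟩ ha
          have hf : StrictMono f := (Finset.mem_filter.1 (Finset.mem_product.1 ha).1).2
          exact Finset.mem_product.2 ⟨Finset.mem_univ _,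
            Finset.mem_filter.2 ⟨Finset.mem_univ _, Stmt16Aux.delR_strictMono r hf⟩⟩
        · rintro ⟨i, g⟩ hb
          have hg : StrictMono g := (Finset.mem_filter.1 (Finset.mem_product.1 hb).2).2
          exact Finset.mem_product.2 ⟨Finset.mem_filter.2 ⟨Finset.mem_univ _,
            Stmt16Aux.insF_strictMono hg i⟩, Finset.mem_univ _⟩
        · rintro ⟨f, r⟩ ha
          have hf : StrictMono f := (Finset.mem_filter.1 (Finset.mem_product.1 ha).1).2
          have h1 := Stmt16Aux.insF_delR hf r
          have h2 := Stmt16Aux.insPos_delR hf r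
          exact Prod.ext h1 h2
        · rintro ⟨i, g⟩ hb
          have hg : StrictMono g := (Finset.mem_filter.1 (Finset.mem_product.1 hb).2).2
          have h1 := Stmt16Aux.insF_apply_same i g
          refine Prod.ext h1 ?_
          exact Stmt16Aux.delR_insF hg i (Stmt16Aux.insF_strictMono hg i).injective
        · rintro ⟨f, r⟩ ha
          have hf : StrictMono f := (Finset.mem_filter.1 (Finset.mem_product.1 ha).1).2
          have hM : ((X.submatrix f id).submatrix r.succAbove j.succAbove)
              = (Matrix.submatrix (fun (p : Fin l) (q : Fin m) =>
                  X ((f r).succAbove p) (j.succAbove q))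
                  (Stmt16Aux.delR f r hf.injective) id) := by
            ext p q
            simp only [Matrix.submatrix_apply, id_eq]
            show X (f (r.succAbove p)) (j.succAbove q) = X ((f r).succAbove (Stmt16Aux.delR f r hf.injective p)) (j.succAbove q)
            rw [Stmt16Aux.succAbove_delR]
          have hw := Stmt16Aux.delR_weight r hf
          have hx : (X.submatrix f id) r j = X (f r) j := rfl
          rw [hx, ← hM]
          have key : (∑ q : Fin (m+1), ((f q : ℕ) - (q : ℕ))) + ((r : ℕ) + (j : ℕ))
              = (∑ q : Fin m, ((Stmt16Aux.delR f r hf.injective q : ℕ) - (q : ℕ)))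
                + ((f r : ℕ) + (j : ℕ)) := by omega
          calc (-1 : F) ^ (∑ q : Fin (m+1), ((f q : ℕ) - (q : ℕ))) *
                ((-1 : F) ^ ((r : ℕ) + (j : ℕ)) * X (f r) j *
                  ((X.submatrix f id).submatrix r.succAbove j.succAbove).det)
              = (-1 : F) ^ ((∑ q : Fin (m+1), ((f q : ℕ) - (q : ℕ))) + ((r : ℕ) + (j : ℕ))) *
                (X (f r) j *
                  ((X.submatrix f id).submatrix r.succAbove j.succAbove).det) := by
                rw [pow_add]; ring
            _ = (-1 : F) ^ ((∑ q : Fin m,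
                  ((Stmt16Aux.delR f r hf.injective q : ℕ) - (q : ℕ)))
                  + ((f r : ℕ) + (j : ℕ))) *
                (X (f r) j *
                  ((X.submatrix f id).submatrix r.succAbove j.succAbove).det) := by
                rw [key]
            _ = (-1 : F) ^ ((f r : ℕ) + (j : ℕ)) * X (f r) j *
                ((-1 : F) ^ (∑ q : Fin m,
                  ((Stmt16Aux.delR f r hf.injective q : ℕ) - (q : ℕ))) *
                  ((X.submatrix f id).submatrix r.succAbove j.succAbove).det) := by
                rw [pow_add]; ring
    _ = ∑ i : Fin (l+1), ∑ g ∈ Finset.univ.filter fun g : Fin m → Fin l => StrictMono g,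
          (-1 : F) ^ ((i : ℕ) + (j : ℕ)) * X i j *
            ((-1 : F) ^ (∑ q : Fin m, ((g q : ℕ) - (q : ℕ))) *
              (Matrix.submatrix (fun (p : Fin l) (q : Fin m) =>
                X (i.succAbove p) (j.succAbove q)) g id).det) := by
        rw [Finset.sum_product]
    _ = ∑ i : Fin (l+1), (-1 : F) ^ ((i : ℕ) + (j : ℕ)) * X i j *
          ∑ g : Fin m → Fin l, (if StrictMono g then
            (-1 : F) ^ (∑ q : Fin m, ((g q : ℕ) - (q : ℕ))) *
              (Matrix.submatrix (fun (p : Fin l) (q : Fin m) =>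
                X (i.succAbove p) (j.succAbove q)) g id).det else 0) := by
        refine Finset.sum_congr rfl fun i _ => ?_
        rw [← Finset.sum_filter, Finset.mul_sum]

/-- Lemma 2.12: Laplace expansion of the Cullis determinant along the `j`-th
column (indices 0-based). -/
theorem stmt16 {F : Type*} [Field F] {n k : ℕ} (hk : 1 < k) (hkn : k ≤ n)
    (X : Matrix (Fin n) (Fin k) F) (j : Fin k) :
    cullisDet X = ∑ i : Fin n, (-1 : F) ^ ((i : ℕ) + (j : ℕ)) * X i j *
      cullisDet (fun (p : Fin (n - 1)) (q : Fin (k - 1)) =>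
        X (skipIdx i p) (skipIdx j q)) := by
  rcases n with _ | l
  · omega
  rcases k with _ | m
  · omega
  have hskip : ∀ (N : ℕ) (i : Fin (N+1)) (p : Fin N), skipIdx i p = i.succAbove p := by
    intro N i p
    apply Fin.ext
    rw [Stmt16Aux.succAbove_val]
    rfl
  simp only [hskip]
  exact Stmt16Aux.aux X j
end

section
/- Let F be a field and let 1 ≤ k ≤ n with n + k odd. For every n×k matrix X over F and every 1 ≤ i ≤ n, let X' be the matrix obtained from X by the row cyclic shift sending row i of X to the first row (so that row i+p−1, indices taken mod n, of X becomes row p of X'). Then (−1)^{(i+1)k} · det_{n,k}(X') = det_{n,k}(X). -/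
namespace CullisAux

open Finset

lemma sm_le {k n : ℕ} {f : Fin k → Fin n} (hf : StrictMono f) (j : Fin k) :
    (j : ℕ) ≤ (f j : ℕ) := by
  have H : ∀ t : ℕ, ∀ j : Fin k, (j : ℕ) = t → t ≤ (f j : ℕ) := by
    intro t
    induction t with
    | zero => exact fun j _ => Nat.zero_le _
    | succ t ih =>
      intro j hj
      have hjk := j.isLt
      have h1 : (⟨t, by omega⟩ : Fin k) < j := by
        simp only [Fin.lt_def]; omega
      have h2 := hf h1
      have h3 := ih ⟨t, by omega⟩ rfl
      simp only [Fin.lt_def] at h2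
      omega
  exact H _ j rfl

def phiMap {N m : ℕ} (f : Fin (m+1) → Fin (N+1)) : Fin (m+1) → Fin (N+1) :=
  if f (Fin.last m) = Fin.last N then fun j => f (j - 1) + 1 else fun j => f j + 1

def psiMap {N m : ℕ} (g : Fin (m+1) → Fin (N+1)) : Fin (m+1) → Fin (N+1) :=
  if g 0 = 0 then fun j => g (j + 1) - 1 else fun j => g j - 1

lemma zero_sub_one (m : ℕ) : (0 - 1 : Fin (m+1)) = Fin.last m := by
  ext
  rw [Fin.coe_sub_one]
  simp

variable {N m : ℕ} {f g : Fin (m+1) → Fin (N+1)}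

lemma phi_wrap_zero (hw : f (Fin.last m) = Fin.last N) : phiMap f 0 = 0 := by
  simp only [phiMap, if_pos hw]
  rw [zero_sub_one, hw, Fin.last_add_one]

lemma phi_wrap_val (hf : StrictMono f) (hw : f (Fin.last m) = Fin.last N)
    {j : Fin (m+1)} (hj : j ≠ 0) :
    ((phiMap f j : ℕ)) = (f (j - 1) : ℕ) + 1 := by
  have hjv : (j : ℕ) ≠ 0 := by rwa [Ne, Fin.ext_iff, Fin.val_zero] at hj
  have hjk := j.isLt
  have hsub : ((j - 1 : Fin (m+1)) : ℕ) = (j : ℕ) - 1 := by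
    rw [Fin.coe_sub_one, if_neg hj]
  have hlt : (j - 1 : Fin (m+1)) < Fin.last m := by
    rw [Fin.lt_def, hsub, Fin.val_last]; omega
  have hflt : f (j - 1) < Fin.last N := hw ▸ hf hlt
  simp only [phiMap, if_pos hw]
  exact Fin.val_add_one_of_lt hflt

lemma phi_wrap_strictMono (hf : StrictMono f) (hw : f (Fin.last m) = Fin.last N) :
    StrictMono (phiMap f) := by
  intro a b hab
  rw [Fin.lt_def]
  by_cases ha : a = 0
  · subst ha
    have hb : b ≠ 0 := by rintro rfl; exact absurd hab (lt_irrefl _)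
    rw [phi_wrap_zero hw, phi_wrap_val hf hw hb]
    simp
  · have hav : (a : ℕ) ≠ 0 := by rwa [Fin.ext_iff, Fin.val_zero] at ha
    have hb : b ≠ 0 := by
      rintro rfl
      rw [Fin.lt_def] at hab
      simp at hab
    rw [phi_wrap_val hf hw ha, phi_wrap_val hf hw hb]
    have hsa : ((a - 1 : Fin (m+1)) : ℕ) = (a : ℕ) - 1 := by
      rw [Fin.coe_sub_one, if_neg ha]
    have hsb : ((b - 1 : Fin (m+1)) : ℕ) = (b : ℕ) - 1 := by
      rw [Fin.coe_sub_one, if_neg hb]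
    have habv : (a : ℕ) < (b : ℕ) := hab
    have hlt : (a - 1 : Fin (m+1)) < b - 1 := by
      rw [Fin.lt_def, hsa, hsb]; omega
    have := hf hlt
    rw [Fin.lt_def] at this
    omega

lemma phi_wrap_sum (hf : StrictMono f) (hw : f (Fin.last m) = Fin.last N) :
    (∑ j : Fin (m+1), ((f j : ℕ) - (j : ℕ)))
      = (N - m) + ∑ j : Fin (m+1), ((phiMap f j : ℕ) - (j : ℕ)) := by
  rw [Fin.sum_univ_castSucc (f := fun j : Fin (m+1) => ((f j : ℕ) - (j : ℕ)))]
  rw [Fin.sum_univ_succ (f := fun j : Fin (m+1) => ((phiMap f j : ℕ) - (j : ℕ)))]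
  have hterm : ∀ j : Fin m,
      ((phiMap f j.succ : ℕ) - (j.succ : ℕ)) = ((f j.castSucc : ℕ) - (j.castSucc : ℕ)) := by
    intro j
    have hsz : (j.succ : Fin (m+1)) ≠ 0 := Fin.succ_ne_zero j
    rw [phi_wrap_val hf hw hsz]
    have hcs : (j.succ - 1 : Fin (m+1)) = j.castSucc := by
      ext
      rw [Fin.coe_sub_one, if_neg hsz]
      simp
    rw [hcs]
    simp [Nat.succ_sub_succ]
  rw [Finset.sum_congr rfl (fun j _ => hterm j), phi_wrap_zero hw, hw]
  simp [Nat.add_comm]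

lemma lt_last_nowrap (hf : StrictMono f) (hw : f (Fin.last m) ≠ Fin.last N)
    (j : Fin (m+1)) : f j < Fin.last N :=
  lt_of_le_of_lt (hf.monotone (Fin.le_last j)) (lt_of_le_of_ne (Fin.le_last _) hw)

lemma phi_nowrap_val (hf : StrictMono f) (hw : f (Fin.last m) ≠ Fin.last N)
    (j : Fin (m+1)) : ((phiMap f j : ℕ)) = (f j : ℕ) + 1 := by
  simp only [phiMap, if_neg hw]
  exact Fin.val_add_one_of_lt (lt_last_nowrap hf hw j)

lemma phi_nowrap_strictMono (hf : StrictMono f) (hw : f (Fin.last m) ≠ Fin.last N) :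
    StrictMono (phiMap f) := by
  intro a b hab
  rw [Fin.lt_def, phi_nowrap_val hf hw, phi_nowrap_val hf hw]
  have := hf hab
  rw [Fin.lt_def] at this
  omega

lemma phi_nowrap_sum (hf : StrictMono f) (hw : f (Fin.last m) ≠ Fin.last N) :
    (∑ j : Fin (m+1), ((phiMap f j : ℕ) - (j : ℕ)))
      = (∑ j : Fin (m+1), ((f j : ℕ) - (j : ℕ))) + (m + 1) := by
  have h : ∀ j ∈ (univ : Finset (Fin (m+1))),
      ((phiMap f j : ℕ) - (j : ℕ)) = ((f j : ℕ) - (j : ℕ)) + 1 := by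
    intro j _
    rw [phi_nowrap_val hf hw]
    have := sm_le hf j
    omega
  rw [Finset.sum_congr rfl h, Finset.sum_add_distrib]
  simp

lemma psi_phi (hf : StrictMono f) : psiMap (phiMap f) = f := by
  by_cases hw : f (Fin.last m) = Fin.last N
  · have h0 : phiMap f 0 = 0 := phi_wrap_zero hw
    funext j
    have e1 : psiMap (phiMap f) j = phiMap f (j + 1) - 1 := by
      simp only [psiMap, if_pos h0]
    rw [e1]
    simp only [phiMap, if_pos hw]
    rw [add_sub_cancel_right, add_sub_cancel_right]
  · have h0 : phiMap f 0 ≠ 0 := by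
      simp only [phiMap, if_neg hw]
      have hlt := lt_last_nowrap hf hw 0
      have hv := Fin.val_add_one_of_lt hlt
      intro h
      rw [h] at hv
      simp at hv
    funext j
    have e1 : psiMap (phiMap f) j = phiMap f j - 1 := by
      simp only [psiMap, if_neg h0]
    rw [e1]
    simp only [phiMap, if_neg hw]
    rw [add_sub_cancel_right]

lemma psi_zero_last (hz : g 0 = 0) : psiMap g (Fin.last m) = Fin.last N := by
  simp only [psiMap, if_pos hz]
  rw [Fin.last_add_one, hz, zero_sub_one]

lemma psi_nzero_ne (hg : StrictMono g) (hz : g 0 ≠ 0) :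
    psiMap g (Fin.last m) ≠ Fin.last N := by
  simp only [psiMap, if_neg hz]
  intro h
  have h1 : g (Fin.last m) = 0 := by
    have h2 := congrArg (· + 1) h
    rw [sub_add_cancel, Fin.last_add_one] at h2
    exact h2
  have h2 : g 0 ≤ g (Fin.last m) := hg.monotone (Fin.zero_le _)
  rw [h1, Fin.le_zero_iff] at h2
  exact hz h2

lemma phi_psi (hg : StrictMono g) : phiMap (psiMap g) = g := by
  by_cases hz : g 0 = 0
  · have hl : psiMap g (Fin.last m) = Fin.last N := psi_zero_last hz
    funext j
    have e1 : phiMap (psiMap g) j = psiMap g (j - 1) + 1 := by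
      simp only [phiMap, if_pos hl]
    rw [e1]
    simp only [psiMap, if_pos hz]
    rw [sub_add_cancel, sub_add_cancel]
  · have hl := psi_nzero_ne hg hz
    funext j
    have e1 : phiMap (psiMap g) j = psiMap g j + 1 := by
      simp only [phiMap, if_neg hl]
    rw [e1]
    simp only [psiMap, if_neg hz]
    rw [sub_add_cancel]

lemma psi_strictMono (hg : StrictMono g) : StrictMono (psiMap g) := by
  by_cases hz : g 0 = 0
  · intro a b hab
    rw [Fin.lt_def]
    have hval : ∀ j : Fin (m+1), j ≠ Fin.last m →
        ((psiMap g j : ℕ)) = (g (j+1) : ℕ) - 1 ∧ 1 ≤ (g (j+1) : ℕ) := by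
      intro j hj
      have hjl : j < Fin.last m := lt_of_le_of_ne (Fin.le_last j) hj
      have hv1 : ((j + 1 : Fin (m+1)) : ℕ) = (j : ℕ) + 1 := Fin.val_add_one_of_lt hjl
      have h1 : (j + 1 : Fin (m+1)) ≠ 0 := by
        intro h
        rw [h] at hv1
        simp at hv1
      have h2 : g (j+1) ≠ 0 := by
        intro h
        have h3 : (0 : Fin (m+1)) < j + 1 := by
          rw [Fin.lt_def, hv1]; simp
        have h4 := hg h3
        rw [hz, h] at h4
        exact lt_irrefl _ h4
      refine ⟨?_, ?_⟩
      · simp only [psiMap, if_pos hz]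
        rw [Fin.coe_sub_one, if_neg h2]
      · have : (g (j+1) : ℕ) ≠ 0 := by rwa [Ne, Fin.ext_iff, Fin.val_zero] at h2
        omega
    have hlast : ((psiMap g (Fin.last m) : ℕ)) = N := by
      rw [psi_zero_last hz, Fin.val_last]
    by_cases hbl : b = Fin.last m
    · subst hbl
      have ha' : a ≠ Fin.last m := ne_of_lt hab
      obtain ⟨h1, h2⟩ := hval a ha'
      have h3 := (g (a+1)).isLt
      rw [h1, hlast]
      omega
    · have hbl' : b < Fin.last m := lt_of_le_of_ne (Fin.le_last b) hbl
      have ha' : a ≠ Fin.last m := ne_of_lt (lt_trans hab hbl')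
      obtain ⟨ha1, ha2⟩ := hval a ha'
      obtain ⟨hb1, hb2⟩ := hval b hbl
      rw [ha1, hb1]
      have hlt : (a + 1 : Fin (m+1)) < b + 1 := by
        rw [Fin.lt_def, Fin.val_add_one_of_lt (lt_trans hab hbl'),
          Fin.val_add_one_of_lt hbl']
        have : (a : ℕ) < (b : ℕ) := hab
        omega
      have := hg hlt
      rw [Fin.lt_def] at this
      omega
  · intro a b hab
    rw [Fin.lt_def]
    have hne : ∀ j, g j ≠ 0 := by
      intro j h
      have h2 : g 0 ≤ g j := hg.monotone (Fin.zero_le _)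
      rw [h, Fin.le_zero_iff] at h2
      exact hz h2
    have hv : ∀ j, ((psiMap g j : ℕ)) = (g j : ℕ) - 1 := by
      intro j
      simp only [psiMap, if_neg hz]
      rw [Fin.coe_sub_one, if_neg (hne j)]
    rw [hv, hv]
    have h3 := hg hab
    rw [Fin.lt_def] at h3
    have h4 : (g a : ℕ) ≠ 0 := by have h5 := hne a; rwa [Ne, Fin.ext_iff, Fin.val_zero] at h5
    omega

lemma phi_wrap_det {F : Type*} [Field F] (X : Matrix (Fin (N+1)) (Fin (m+1)) F)
    (hw : f (Fin.last m) = Fin.last N) :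
    (Matrix.submatrix (fun p q => X (p+1) q) f id).det
      = (-1 : F)^m * (X.submatrix (phiMap f) id).det := by
  have e1 : Matrix.submatrix (fun p q => X (p+1) q) f id
      = (X.submatrix (phiMap f) id).submatrix (finRotate (m+1)) id := by
    ext i q
    simp only [Matrix.submatrix_apply, id_eq, finRotate_succ_apply, phiMap, if_pos hw]
    rw [add_sub_cancel_right]
    rfl
  rw [e1, Matrix.det_permute, sign_finRotate]
  push_cast
  ring

lemma phi_nowrap_det {F : Type*} [Field F] (X : Matrix (Fin (N+1)) (Fin (m+1)) F)
    (hw : f (Fin.last m) ≠ Fin.last N) :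
    Matrix.submatrix (fun p q => X (p+1) q) f id = X.submatrix (phiMap f) id := by
  ext i q
  simp only [Matrix.submatrix_apply, phiMap, if_neg hw]
  rfl

lemma term_eq {F : Type*} [Field F] (hmn : m ≤ N) (hodd : Odd ((N+1) + (m+1)))
    (X : Matrix (Fin (N+1)) (Fin (m+1)) F) (hf : StrictMono f) :
    (-1 : F) ^ (∑ j : Fin (m+1), ((f j : ℕ) - (j : ℕ)))
        * (Matrix.submatrix (fun p q => X (p+1) q) f id).det
      = (-1 : F) ^ (m+1) * ((-1 : F) ^ (∑ j : Fin (m+1), ((phiMap f j : ℕ) - (j : ℕ)))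
        * (X.submatrix (phiMap f) id).det) := by
  obtain ⟨c, hc⟩ := hodd
  by_cases hw : f (Fin.last m) = Fin.last N
  · rw [phi_wrap_det X hw, phi_wrap_sum hf hw, pow_add]
    have key : (-1 : F) ^ (N - m) * (-1 : F) ^ m = (-1 : F) ^ (m+1) := by
      rw [← pow_add, Nat.sub_add_cancel hmn, neg_one_pow_eq_pow_mod_two,
        neg_one_pow_eq_pow_mod_two (n := m+1)]
      congr 1
      omega
    linear_combination ((-1 : F) ^ (∑ j : Fin (m+1), ((phiMap f j : ℕ) - (j : ℕ)))
      * (X.submatrix (phiMap f) id).det) * key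
  · rw [phi_nowrap_det X hw, phi_nowrap_sum hf hw, pow_add]
    have key : ((-1 : F) ^ (m+1)) * ((-1 : F) ^ (m+1)) = 1 := by
      rw [← pow_add]
      exact Even.neg_one_pow ⟨m+1, by ring⟩
    linear_combination (-((-1 : F) ^ (∑ j : Fin (m+1), ((f j : ℕ) - (j : ℕ)))
      * (X.submatrix (phiMap f) id).det)) * key

open Classical in
lemma cullis_eq_filter {F : Type*} [Field F] {n k : ℕ} (X : Matrix (Fin n) (Fin k) F) :
    cullisDet X = ∑ f ∈ Finset.univ.filter (fun f : Fin k → Fin n => StrictMono f),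
      (-1 : F) ^ (∑ j : Fin k, ((f j : ℕ) - (j : ℕ))) * (X.submatrix f id).det := by
  rw [cullisDet, Finset.sum_filter]

lemma shift_one {F : Type*} [Field F] {N m : ℕ} (hmn : m ≤ N) (hodd : Odd ((N+1) + (m+1)))
    (X : Matrix (Fin (N+1)) (Fin (m+1)) F) :
    cullisDet (fun p q => X (p + 1) q) = (-1 : F) ^ (m+1) * cullisDet X := by
  classical
  refine (cullis_eq_filter _).trans ?_
  rw [cullis_eq_filter, Finset.mul_sum]
  refine Finset.sum_nbij' phiMap psiMap ?_ ?_ ?_ ?_ ?_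
  · intro f hf
    rw [Finset.mem_filter] at hf ⊢
    refine ⟨Finset.mem_univ _, ?_⟩
    by_cases hw : f (Fin.last m) = Fin.last N
    · exact phi_wrap_strictMono hf.2 hw
    · exact phi_nowrap_strictMono hf.2 hw
  · intro g hg
    rw [Finset.mem_filter] at hg ⊢
    exact ⟨Finset.mem_univ _, psi_strictMono hg.2⟩
  · intro f hf
    rw [Finset.mem_filter] at hf
    exact psi_phi hf.2
  · intro g hg
    rw [Finset.mem_filter] at hg
    exact phi_psi hg.2
  · intro f hf
    rw [Finset.mem_filter] at hf
    exact term_eq hmn hodd X hf.2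

end CullisAux

/-- Lemma 2.13: invariance of the Cullis determinant under cyclic row shifts,
up to the sign `(-1)^{(i+1)k}`, when `n + k` is odd. Indices are 0-based:
for `i : Fin n` (paper index `i + 1`), the shifted matrix has row `p` equal
to row `i + p` (mod `n`) of `X`, and `(-1)^{(i+1+1)k} = (-1)^{i·k}`. -/
theorem stmt17 {F : Type*} [Field F] {n k : ℕ} (hk : 1 ≤ k) (hkn : k ≤ n)
    (hodd : Odd (n + k)) (X : Matrix (Fin n) (Fin k) F) (i : Fin n) :
    (-1 : F) ^ ((i : ℕ) * k) *
      cullisDet (fun (p : Fin n) (q : Fin k) => X (i + p) q) = cullisDet X := by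
  obtain ⟨m, rfl⟩ : ∃ m, k = m + 1 := ⟨k - 1, by omega⟩
  obtain ⟨N, rfl⟩ : ∃ N, n = N + 1 := ⟨n - 1, by omega⟩
  suffices H : ∀ t (ht : t < N + 1),
      (-1 : F) ^ (t * (m+1)) * cullisDet (fun p q => X (⟨t, ht⟩ + p) q) = cullisDet X by
    have := H i.val i.isLt
    simpa only [Fin.eta] using this
  intro t
  induction t with
  | zero =>
    intro ht
    have h0 : (⟨0, ht⟩ : Fin (N+1)) = 0 := by ext; simp
    simp only [h0, zero_add, Nat.zero_mul, pow_zero, one_mul]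
  | succ t ih =>
    intro ht
    have ht' : t < N + 1 := by omega
    have hfin : (⟨t+1, ht⟩ : Fin (N+1)) = ⟨t, ht'⟩ + 1 := by
      ext
      have h2 : (1 : ℕ) % (N+1) = 1 := Nat.mod_eq_of_lt (by omega)
      rw [Fin.val_add, Fin.val_one', h2, Nat.mod_eq_of_lt ht]
    have hstep : (fun p (q : Fin (m+1)) => X ((⟨t+1, ht⟩ : Fin (N+1)) + p) q)
        = (fun p (q : Fin (m+1)) => X ((⟨t, ht'⟩ : Fin (N+1)) + (p + 1)) q) := by
      funext p q
      rw [hfin, add_assoc, add_comm 1 p]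
    rw [hstep]
    rw [CullisAux.shift_one (by omega) hodd (fun p q => X ((⟨t, ht'⟩ : Fin (N+1)) + p) q)]
    rw [← mul_assoc, ← pow_add]
    have he : (t+1) * (m+1) + (m+1) = t * (m+1) + 2 * (m+1) := by ring
    rw [he, pow_add]
    have h12 : (-1 : F) ^ (2 * (m+1)) = 1 := by
      rw [pow_mul]; norm_num
    rw [h12, mul_one]
    exact ih ht'
end

section
/- Let F be a field and let 1 ≤ k < n with n + k odd. Then for every n×k matrix A over F and every matrix X ∈ W_{n,k} (i.e. every n×k matrix all of whose rows are equal), det_{n,k}(A + X) = det_{n,k}(A). -/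
open Finset

lemma lemA {F : Type*} [Field F] {k : ℕ} (M : Matrix (Fin k) (Fin k) F) (v : Fin k → F) :
    (Matrix.of (fun i => M i + v)).det = M.det + ∑ r : Fin k, (M.updateRow r v).det := by
  classical
  have h0 : (Matrix.of (fun i => M i + v)).det
      = Matrix.detRowAlternating.toMultilinearMap ((fun i : Fin k => M i) + (fun _ => v)) := rfl
  rw [h0, Matrix.detRowAlternating.toMultilinearMap.map_add_univ
    (fun i : Fin k => M i) (fun _ => v)]
  set G : Finset (Fin k) → F :=
    fun s => Matrix.detRowAlternating.toMultilinearMap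
      (s.piecewise (fun i : Fin k => M i) (fun _ => v)) with hG
  have hzero : ∀ s : Finset (Fin k), 2 ≤ sᶜ.card → G s = 0 := by
    intro s hs
    obtain ⟨a, ha, b, hb, hab⟩ := Finset.one_lt_card.mp hs
    refine Matrix.detRowAlternating.map_eq_zero_of_eq _ ?_ hab
    rw [Finset.piecewise_eq_of_notMem _ _ _ (Finset.mem_compl.mp ha),
        Finset.piecewise_eq_of_notMem _ _ _ (Finset.mem_compl.mp hb)]
  have hsub : ∑ s : Finset (Fin k), G s
      = ∑ s ∈ (Finset.univ.image (fun o : Option (Fin k) => (o.elim ∅ singleton)ᶜ)), G s := by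
    refine (Finset.sum_subset (Finset.subset_univ _) ?_).symm
    intro s _ hs
    refine hzero s ?_
    by_contra h
    push_neg at h
    interval_cases hc : sᶜ.card
    · refine hs (Finset.mem_image.mpr ⟨none, Finset.mem_univ _, ?_⟩)
      have : sᶜ = ∅ := Finset.card_eq_zero.mp hc
      simp only [Option.elim]
      rw [← compl_compl s, this]
    · obtain ⟨a, ha⟩ := Finset.card_eq_one.mp hc
      refine hs (Finset.mem_image.mpr ⟨some a, Finset.mem_univ _, ?_⟩)
      simp only [Option.elim]
      rw [← compl_compl s, ha]
  rw [hsub, Finset.sum_image (by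
    intro o _ o' _ h
    have h2 := compl_injective h
    match o, o' with
    | none, none => rfl
    | some a, some b => simp_all
    | none, some b => exact absurd h2.symm (Finset.singleton_ne_empty b)
    | some a, none => exact absurd h2 (Finset.singleton_ne_empty a))]
  rw [Fintype.sum_option]
  congr 1
  · simp only [Option.elim, hG, compl_empty, Finset.piecewise_univ]
    rfl
  · refine Finset.sum_congr rfl fun r _ => ?_
    have h3 : (({r} : Finset (Fin k))ᶜ)ᶜ.piecewise (fun _ : Fin k => v) (fun i : Fin k => M i)
        = M.updateRow r v := by
      funext i j
      by_cases hi : i = r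
      · subst hi
        rw [compl_compl, Finset.piecewise_eq_of_mem _ _ _ (by simp), Matrix.updateRow_self]
      · rw [compl_compl, Finset.piecewise_eq_of_notMem _ _ _ (by simp [hi]),
          Matrix.updateRow_ne hi]
    rw [hG]
    simp only [Option.elim]
    exact congrArg (⇑Matrix.detRowAlternating) ((Finset.piecewise_compl ..).symm.trans h3)

open Finset

lemma lemB {F : Type*} [Field F] {n m : ℕ} (A : Matrix (Fin n) (Fin (m+1)) F)
    (v : Fin (m+1) → F) (f : Fin (m+1) → Fin n) (r : Fin (m+1)) :
    ((A.submatrix f id).updateRow r v).det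
      = (-1 : F)^(r : ℕ)
        * (Matrix.of (Fin.cons v (fun s => A (f (r.succAbove s))))).det := by
  set w : Fin m → (Fin (m+1) → F) := fun s => A (f (r.succAbove s)) with hw
  set Mg : Matrix (Fin (m+1)) (Fin (m+1)) F :=
    Matrix.of (Fin.cons v w) with hMg
  have key : (A.submatrix f id).updateRow r v = Mg.submatrix (r.cycleRange) id := by
    funext i j
    rcases lt_trichotomy i r with h | h | h
    · have h1 : r.cycleRange i = i + 1 := Fin.cycleRange_of_lt h
      have hri : (i : ℕ) < (r : ℕ) := h
      have hi : (i : ℕ) < m := by omega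
      have h2 : (i + 1 : Fin (m+1)) = Fin.succ ⟨(i : ℕ), hi⟩ := by
        apply Fin.ext
        rw [Fin.val_add_one_of_lt (by rw [Fin.lt_iff_val_lt_val]; simp; omega)]
        rfl
      have h3 : r.succAbove ⟨(i : ℕ), hi⟩ = i := by
        rw [Fin.succAbove_of_castSucc_lt _ _ (by rw [Fin.lt_iff_val_lt_val]; simpa using hri)]
        apply Fin.ext; simp
      rw [Matrix.updateRow_ne h.ne, Matrix.submatrix_apply, Matrix.submatrix_apply, h1, h2,
        hMg, Matrix.of_apply, Fin.cons_succ]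
      simp only [hw, h3, id_eq]
    · subst h
      rw [Matrix.updateRow_self, Matrix.submatrix_apply, Fin.cycleRange_self, hMg,
        Matrix.of_apply, Fin.cons_zero]
      rfl
    · have h1 : r.cycleRange i = i := Fin.cycleRange_of_gt h
      have hri : (r : ℕ) < (i : ℕ) := h
      have hi0 : i ≠ 0 := by
        intro hc; subst hc; simp at hri
      have h2 : i = Fin.succ (i.pred hi0) := (Fin.succ_pred i hi0).symm
      have h3 : r.succAbove (i.pred hi0) = i := by
        rw [Fin.succAbove_of_le_castSucc _ _ (by
          rw [Fin.le_iff_val_le_val]; simp; omega), Fin.succ_pred]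
      rw [Matrix.updateRow_ne h.ne', Matrix.submatrix_apply, Matrix.submatrix_apply, h1]
      conv_rhs => rw [h2]
      rw [hMg, Matrix.of_apply, Fin.cons_succ]
      simp only [hw, h3, id_eq]
  rw [key, Matrix.det_permute, Fin.sign_cycleRange]
  norm_num

-- card of {j | f j < f r} for strictMono f into a linear order
lemma card_lt_apply {α : Type*} [LinearOrder α] {k : ℕ} {f : Fin k → α}
    (hf : StrictMono f) (r : Fin k) :
    (Finset.univ.filter fun j => f j < f r).card = (r : ℕ) := by
  have h1 : (Finset.univ.filter fun j => f j < f r)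
      = Finset.univ.filter fun j => j < r := by
    apply Finset.filter_congr
    intro j _
    simp [hf.lt_iff_lt]
  rw [h1]
  have h2 : Finset.univ.filter (fun j => j < r) = Finset.Iio r := by
    ext j; simp
  rw [h2, Fin.card_Iio]

-- count in the removed tuple equals r
lemma cnt_succAbove {n m : ℕ} {f : Fin (m+1) → Fin n} (hf : StrictMono f)
    (r : Fin (m+1)) :
    (Finset.univ.filter fun s : Fin m => f (r.succAbove s) < f r).card = (r : ℕ) := by
  have key : (Finset.univ.filter fun j : Fin (m+1) => f j < f r)
      = (Finset.univ.filter fun s : Fin m => f (r.succAbove s) < f r).map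
          (r.succAboveOrderEmb).toEmbedding := by
    ext j
    simp only [Finset.mem_filter, Finset.mem_univ, true_and, Finset.mem_map,
      RelEmbedding.coe_toEmbedding, Fin.succAboveOrderEmb_apply]
    constructor
    · intro hj
      have hjr : j ≠ r := by rintro rfl; exact lt_irrefl _ hj
      obtain ⟨s, hs⟩ := Fin.exists_succAbove_eq hjr
      exact ⟨s, by rwa [hs], hs⟩
    · rintro ⟨s, hs, rfl⟩; exact hs
  have := congrArg Finset.card key
  rw [Finset.card_map, card_lt_apply hf r] at this
  omega

-- strictMono maps with equal images are equal
lemma strictMono_eq_of_image_eq {n k : ℕ} {f f' : Fin k → Fin n}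
    (hf : StrictMono f) (hf' : StrictMono f')
    (h : Finset.univ.image f = Finset.univ.image f') : f = f' := by
  have hcard : (Finset.univ.image f).card = k := by
    rw [Finset.card_image_of_injective _ hf.injective, Finset.card_univ, Fintype.card_fin]
  have h1 := Finset.orderEmbOfFin_unique hcard
    (f := f) (fun x => Finset.mem_image_of_mem f (Finset.mem_univ x)) hf
  have h2 := Finset.orderEmbOfFin_unique hcard
    (f := f') (fun x => h ▸ Finset.mem_image_of_mem f' (Finset.mem_univ x)) hf'
  rw [h1, h2]

-- alternating sum over ranks in a finset of even cardinality
lemma sum_neg_one_pow_rank {F : Type*} [Field F] {n : ℕ} (C : Finset (Fin n))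
    (h2 : Even C.card) :
    ∑ p ∈ C, (-1 : F) ^ ((C.filter (· < p)).card) = 0 := by
  classical
  have mono : ∀ p ∈ C, ∀ q ∈ C, p < q →
      (C.filter (· < p)).card < (C.filter (· < q)).card := by
    intro p hp q hq hpq
    have hsub : C.filter (· < p) ⊆ (C.filter (· < q)).erase p := by
      intro x hx
      rw [Finset.mem_erase]
      rw [Finset.mem_filter] at hx
      exact ⟨ne_of_lt hx.2, Finset.mem_filter.mpr ⟨hx.1, hx.2.trans hpq⟩⟩
    have hple : p ∈ C.filter (· < q) := Finset.mem_filter.mpr ⟨hp, hpq⟩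
    calc (C.filter (· < p)).card ≤ ((C.filter (· < q)).erase p).card :=
          Finset.card_le_card hsub
      _ < (C.filter (· < q)).card := Finset.card_erase_lt_of_mem hple
  have hmem : ∀ p ∈ C, (C.filter (· < p)).card ∈ Finset.range C.card := by
    intro p hp
    rw [Finset.mem_range]
    have : C.filter (· < p) ⊆ C.erase p := by
      intro x hx
      rw [Finset.mem_filter] at hx
      exact Finset.mem_erase.mpr ⟨ne_of_lt hx.2, hx.1⟩
    calc (C.filter (· < p)).card ≤ (C.erase p).card := Finset.card_le_card this
      _ < C.card := Finset.card_erase_lt_of_mem hp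
  have hinj : Set.InjOn (fun p => (C.filter (· < p)).card) C := by
    intro p hp q hq h
    by_contra hne
    rcases lt_or_gt_of_ne hne with hlt | hlt
    · exact absurd h (ne_of_lt (mono p hp q hq hlt))
    · exact absurd h.symm (ne_of_lt (mono q hq p hp hlt))
  have hsurj : Set.SurjOn (fun p => (C.filter (· < p)).card) C
      (Finset.range C.card) := by
    intro b hb
    simp only [Finset.coe_range, Set.mem_Iio] at hb
    obtain ⟨a, ha, hab⟩ := Finset.surj_on_of_inj_on_of_card_le
      (s := C) (t := Finset.range C.card)
      (fun p _ => (C.filter (· < p)).card) (fun p hp => hmem p hp)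
      (fun p q hp hq h => hinj hp hq h)
      (by rw [Finset.card_range]) b (Finset.mem_range.mpr hb)
    exact ⟨a, ha, hab.symm⟩
  rw [Finset.sum_nbij (fun p => (C.filter (· < p)).card) hmem hinj hsurj
    (fun p _ => rfl)]
  rw [neg_one_geom_sum]
  simp [h2]

lemma lemC {F : Type*} [Field F] {n m : ℕ} (heven : Even (n - m))
    {g : Fin m → Fin n} (hg : StrictMono g) :
    ∑ p ∈ Finset.univ.filter (fun p : Fin n => ∀ s, g s ≠ p),
      (-1 : F) ^ ((p : ℕ) + (Finset.univ.filter fun s => g s < p).card) = 0 := by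
  classical
  set C : Finset (Fin n) := Finset.univ.filter (fun p : Fin n => ∀ s, g s ≠ p) with hC
  have hCeq : C = (Finset.univ.image g)ᶜ := by
    ext p
    simp [hC, eq_comm]
  have hCcard : C.card = n - m := by
    rw [hCeq, Finset.card_compl, Finset.card_image_of_injective _ hg.injective,
      Finset.card_univ, Fintype.card_fin, Fintype.card_fin]
  have hsplit : ∀ p ∈ C, (p : ℕ)
      = (Finset.univ.filter fun s => g s < p).card + (C.filter (· < p)).card := by
    intro p hp
    have h1 : (Finset.univ.filter (fun x : Fin n => x < p)).card = (p : ℕ) := by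
      have : Finset.univ.filter (fun x : Fin n => x < p) = Finset.Iio p := by
        ext x; simp
      rw [this, Fin.card_Iio]
    have h2 := Finset.card_inter_add_card_sdiff
      (Finset.univ.filter (fun x : Fin n => x < p)) (Finset.univ.image g)
    have h3 : Finset.univ.filter (fun x : Fin n => x < p) ∩ Finset.univ.image g
        = (Finset.univ.filter fun s => g s < p).image g := by
      ext x
      simp only [Finset.mem_inter, Finset.mem_filter, Finset.mem_univ, true_and,
        Finset.mem_image]
      constructor
      · rintro ⟨hxp, s, rfl⟩
        exact ⟨s, hxp, rfl⟩
      · rintro ⟨s, hs, rfl⟩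
        exact ⟨hs, s, rfl⟩
    have h4 : Finset.univ.filter (fun x : Fin n => x < p) \ Finset.univ.image g
        = C.filter (· < p) := by
      ext x
      simp only [Finset.mem_sdiff, Finset.mem_filter, Finset.mem_univ, true_and,
        Finset.mem_image, hC]
      constructor
      · rintro ⟨hxp, hxi⟩
        exact ⟨fun s hs => hxi ⟨s, hs⟩, hxp⟩
      · rintro ⟨hxi, hxp⟩
        exact ⟨hxp, fun ⟨s, hs⟩ => hxi s hs⟩
    have h5 : ((Finset.univ.filter fun s => g s < p).image g).card
        = (Finset.univ.filter fun s => g s < p).card :=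
      Finset.card_image_of_injective _ hg.injective
    rw [h3, h4, h5, h1] at h2
    omega
  have := sum_neg_one_pow_rank (F := F) C (hCcard ▸ heven)
  rw [← this]
  refine Finset.sum_congr rfl fun p hp => ?_
  have h6 := hsplit p hp
  rw [show (p : ℕ) + (Finset.univ.filter fun s => g s < p).card
      = 2 * (Finset.univ.filter fun s => g s < p).card + (C.filter (· < p)).card
    from by omega]
  rw [pow_add, pow_mul, neg_one_sq, one_pow, one_mul]

lemma neg_one_pow_parity {F : Type*} [Field F] (a b : ℕ) (h : a % 2 = b % 2) :
    (-1 : F) ^ a = (-1) ^ b := by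
  conv_lhs => rw [← Nat.div_add_mod a 2]
  conv_rhs => rw [← Nat.div_add_mod b 2]
  simp only [pow_add, pow_mul, neg_one_sq, one_pow, one_mul, h]

lemma le_apply_of_strictMono {n k : ℕ} {f : Fin k → Fin n} (hf : StrictMono f)
    (j : Fin k) : (j : ℕ) ≤ (f j : ℕ) := by
  have key : ∀ a : ℕ, ∀ h : a < k, a ≤ (f ⟨a, h⟩ : ℕ) := by
    intro a
    induction a with
    | zero => intro h; exact Nat.zero_le _
    | succ a ih =>
      intro h
      have h' : a < k := by omega
      have h1 := ih h'
      have hlt : f ⟨a, h'⟩ < f ⟨a + 1, h⟩ := hf (by simp [Fin.lt_iff_val_lt_val])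
      have h2 := Fin.lt_iff_val_lt_val.mp hlt
      omega
  simpa using key j.1 j.2

lemma sign_eq {F : Type*} [Field F] {n m : ℕ} {f : Fin (m+1) → Fin n}
    (hf : StrictMono f) (r : Fin (m+1)) :
    (-1 : F) ^ (∑ j : Fin (m+1), ((f j : ℕ) - (j : ℕ))) * (-1) ^ (r : ℕ)
      = (-1) ^ ((∑ s : Fin m, ((f (r.succAbove s) : ℕ) + (s : ℕ)))
          + (m + ((f r : ℕ)
            + (Finset.univ.filter fun s : Fin m => f (r.succAbove s) < f r).card))) := by
  rw [← pow_add]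
  apply neg_one_pow_parity
  have hS : (∑ j : Fin (m+1), ((f j : ℕ) - (j : ℕ))) + (∑ j : Fin (m+1), (j : ℕ))
      = ∑ j : Fin (m+1), (f j : ℕ) := by
    rw [← Finset.sum_add_distrib]
    exact Finset.sum_congr rfl fun j _ => by
      have := le_apply_of_strictMono hf j; omega
  have h1 : ∑ j : Fin (m+1), (f j : ℕ)
      = (f r : ℕ) + ∑ s : Fin m, (f (r.succAbove s) : ℕ) :=
    Fin.sum_univ_succAbove (fun j => (f j : ℕ)) r
  have h2 : ∑ j : Fin (m+1), (j : ℕ) = (∑ s : Fin m, (s : ℕ)) + m := by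
    rw [Fin.sum_univ_castSucc]; simp
  have h3 : (Finset.univ.filter fun s : Fin m => f (r.succAbove s) < f r).card = (r : ℕ) :=
    cnt_succAbove hf r
  have h4 : ∑ s : Fin m, ((f (r.succAbove s) : ℕ) + (s : ℕ))
      = (∑ s : Fin m, (f (r.succAbove s) : ℕ)) + (∑ s : Fin m, (s : ℕ)) :=
    Finset.sum_add_distrib
  omega

/-- Lemma 2.16: adding a matrix all of whose rows are equal does not change
the Cullis determinant when `n + k` is odd. -/
theorem stmt18 {F : Type*} [Field F] {n k : ℕ} (hk : 1 ≤ k) (hkn : k < n)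
    (hodd : Odd (n + k)) (A X : Matrix (Fin n) (Fin k) F)
    (hX : ∀ i i' : Fin n, X i = X i') :
    cullisDet (A + X) = cullisDet A := by
  classical
  obtain ⟨m, rfl⟩ : ∃ m, k = m + 1 := ⟨k - 1, by omega⟩
  have hn0 : 0 < n := by omega
  set v : Fin (m+1) → F := X ⟨0, hn0⟩ with hvdef
  have hv : ∀ i : Fin n, X i = v := fun i => hX i ⟨0, hn0⟩
  set D : (Fin m → Fin n) → F :=
    fun g => (Matrix.of (Fin.cons v (fun s => A (g s)))).det with hD
  set E : (Fin m → Fin n) → Fin n → ℕ := fun g p =>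
    (∑ s : Fin m, ((g s : ℕ) + (s : ℕ)))
      + (m + ((p : ℕ) + (Finset.univ.filter fun s => g s < p).card)) with hE
  rw [← sub_eq_zero]
  have hcd : ∀ B : Matrix (Fin n) (Fin (m+1)) F,
      cullisDet B = ∑ f : Fin (m+1) → Fin n, if StrictMono f then
        (-1 : F) ^ (∑ j : Fin (m+1), ((f j : ℕ) - (j : ℕ))) * (B.submatrix f id).det
      else 0 := fun _ => rfl
  rw [hcd (A + X), hcd A, ← Finset.sum_sub_distrib]
  have step1 : ∀ f : Fin (m+1) → Fin n,
      ((if StrictMono f then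
          (-1 : F) ^ (∑ j : Fin (m+1), ((f j : ℕ) - (j : ℕ)))
            * (((A + X)).submatrix f id).det else 0)
        - (if StrictMono f then
          (-1 : F) ^ (∑ j : Fin (m+1), ((f j : ℕ) - (j : ℕ)))
            * ((A).submatrix f id).det else 0))
      = ∑ r : Fin (m+1), if StrictMono f then
          (-1 : F) ^ (E (f ∘ r.succAbove) (f r)) * D (f ∘ r.succAbove) else 0 := by
    intro f
    by_cases hsm : StrictMono f
    · simp only [hsm, if_true]
      have hAX : ((A + X).submatrix f id)
          = Matrix.of (fun i => (A.submatrix f id) i + v) := by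
        funext i j
        simp [Matrix.submatrix_apply, Matrix.add_apply, hv (f i)]
      rw [hAX, lemA, mul_add, add_sub_cancel_left, Finset.mul_sum]
      refine Finset.sum_congr rfl fun r _ => ?_
      rw [lemB A v f r, ← mul_assoc, sign_eq hsm r]
      rfl
    · simp [hsm]
  rw [Finset.sum_congr rfl (fun f _ => step1 f)]
  have step2 : (∑ f : Fin (m+1) → Fin n, ∑ r : Fin (m+1), if StrictMono f then
        (-1 : F) ^ (E (f ∘ r.succAbove) (f r)) * D (f ∘ r.succAbove) else 0)
      = ∑ q ∈ Finset.univ.filter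
          (fun q : ((Fin (m+1) → Fin n) × Fin (m+1)) => StrictMono q.1),
          (-1 : F) ^ (E (q.1 ∘ q.2.succAbove) (q.1 q.2)) * D (q.1 ∘ q.2.succAbove) := by
    rw [Finset.sum_filter, Fintype.sum_prod_type]
  rw [step2]
  have himg : ∀ (f : Fin (m+1) → Fin n) (r : Fin (m+1)),
      Finset.univ.image f
        = insert (f r) (Finset.univ.image (f ∘ r.succAbove)) := by
    intro f r
    ext x
    simp only [Finset.mem_image, Finset.mem_univ, true_and, Finset.mem_insert,
      Function.comp_apply]
    constructor
    · rintro ⟨j, rfl⟩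
      rcases eq_or_ne j r with rfl | hne
      · exact Or.inl rfl
      · obtain ⟨s, hs⟩ := Fin.exists_succAbove_eq hne
        exact Or.inr ⟨s, by rw [hs]⟩
    · rintro (rfl | ⟨s, rfl⟩)
      · exact ⟨r, rfl⟩
      · exact ⟨r.succAbove s, rfl⟩
  have step3 : (∑ q ∈ Finset.univ.filter
          (fun q : ((Fin (m+1) → Fin n) × Fin (m+1)) => StrictMono q.1),
          (-1 : F) ^ (E (q.1 ∘ q.2.succAbove) (q.1 q.2)) * D (q.1 ∘ q.2.succAbove))
      = ∑ q ∈ Finset.univ.filter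
          (fun q : ((Fin m → Fin n) × Fin n) => StrictMono q.1 ∧ ∀ s, q.1 s ≠ q.2),
          (-1 : F) ^ (E q.1 q.2) * D q.1 := by
    refine Finset.sum_nbij (fun q => (q.1 ∘ q.2.succAbove, q.1 q.2)) ?_ ?_ ?_ ?_
    · intro q hq
      rw [Finset.mem_filter] at hq ⊢
      obtain ⟨-, hsm⟩ := hq
      refine ⟨Finset.mem_univ _, hsm.comp (Fin.strictMono_succAbove q.2), fun s h => ?_⟩
      exact Fin.succAbove_ne q.2 s (hsm.injective h)
    · intro q hq q' hq' heq
      simp only [Finset.coe_filter, Set.mem_setOf_eq] at hq hq'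
      obtain ⟨-, hsm⟩ := hq
      obtain ⟨-, hsm'⟩ := hq'
      rw [Prod.mk.injEq] at heq
      obtain ⟨h1, h2⟩ := heq
      have himg2 : Finset.univ.image q.1 = Finset.univ.image q'.1 := by
        rw [himg q.1 q.2, himg q'.1 q'.2, h1, h2]
      have hf : q.1 = q'.1 := strictMono_eq_of_image_eq hsm hsm' himg2
      have hr : q.2 = q'.2 := hsm.injective (by rw [h2, ← hf])
      exact Prod.ext hf hr
    · intro q' hq'
      simp only [Finset.coe_filter, Set.mem_setOf_eq] at hq'
      obtain ⟨-, hsm, hnr⟩ := hq'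
      obtain ⟨g, p⟩ := q'
      simp only at hsm hnr
      have hpT : p ∉ Finset.univ.image g := by
        simp only [Finset.mem_image, Finset.mem_univ, true_and, not_exists]
        exact fun s hs => hnr s hs
      have hTcard : (insert p (Finset.univ.image g)).card = m + 1 := by
        rw [Finset.card_insert_of_notMem hpT,
          Finset.card_image_of_injective _ hsm.injective, Finset.card_univ,
          Fintype.card_fin]
      set f : Fin (m+1) → Fin n
        := ⇑((insert p (Finset.univ.image g)).orderEmbOfFin hTcard) with hfdef
      have hfsm : StrictMono f := ((insert p (Finset.univ.image g)).orderEmbOfFin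
        hTcard).strictMono
      obtain ⟨r, hr⟩ : ∃ r, f r = p := by
        have hrange := Finset.range_orderEmbOfFin (insert p (Finset.univ.image g)) hTcard
        have : p ∈ Set.range f := by
          rw [hfdef, hrange]
          exact_mod_cast Finset.mem_insert_self p _
        exact this
      refine ⟨(f, r), ?_, ?_⟩
      · simp only [Finset.coe_filter, Set.mem_setOf_eq]
        exact ⟨Finset.mem_univ _, hfsm⟩
      · have hgcard : (Finset.univ.image g).card = m := by
          rw [Finset.card_image_of_injective _ hsm.injective, Finset.card_univ,
            Fintype.card_fin]
        have h5 : ∀ x, (f ∘ r.succAbove) x ∈ Finset.univ.image g := by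
          intro x
          have h6 : f (r.succAbove x) ∈ insert p (Finset.univ.image g) :=
            Finset.orderEmbOfFin_mem _ hTcard _
          have h7 : f (r.succAbove x) ≠ p := by
            rw [← hr]
            exact fun h => (Fin.succAbove_ne r x) (hfsm.injective h)
          rcases Finset.mem_insert.mp h6 with h | h
          · exact absurd h h7
          · exact h
        have hcomp : f ∘ r.succAbove = g :=
          (Finset.orderEmbOfFin_unique hgcard h5
            (hfsm.comp (Fin.strictMono_succAbove r))).trans
          (Finset.orderEmbOfFin_unique hgcard
            (fun x => Finset.mem_image_of_mem g (Finset.mem_univ x)) hsm).symm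
        rw [Prod.mk.injEq]
        exact ⟨hcomp, hr⟩
    · intro q hq
      rfl
  rw [step3, Finset.sum_filter, Fintype.sum_prod_type]
  refine Finset.sum_eq_zero fun g _ => ?_
  by_cases hsm : StrictMono g
  · simp only [hsm, true_and]
    rw [← Finset.sum_filter]
    have heven : Even (n - m) := by
      obtain ⟨c, hc⟩ := hodd
      exact ⟨c - m, by omega⟩
    have hfactor : ∀ p : Fin n, (-1 : F) ^ (E g p) * D g
        = (((-1 : F) ^ ((∑ s : Fin m, ((g s : ℕ) + (s : ℕ))) + m)) * D g)
          * (-1 : F) ^ ((p : ℕ) + (Finset.univ.filter fun s => g s < p).card) := by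
      intro p
      rw [hE]
      simp only []
      rw [show (∑ s : Fin m, ((g s : ℕ) + (s : ℕ)))
          + (m + ((p : ℕ) + (Finset.univ.filter fun s => g s < p).card))
        = ((∑ s : Fin m, ((g s : ℕ) + (s : ℕ))) + m)
          + ((p : ℕ) + (Finset.univ.filter fun s => g s < p).card) from by omega]
      rw [pow_add]
      ring
    rw [Finset.sum_congr rfl (fun p _ => hfactor p), ← Finset.mul_sum,
      lemC heven hsm, mul_zero]
  · simp [hsm]
end

section
/- Let F be a field, n ≥ k ≥ 1, A an n×n matrix and B a k×k matrix over F, and let T be the linear map on M_{n×k}(F) defined by T(X) = AXB. Then det_{n,k}(T(X)) = det_{n,k}(X) for all n×k matrices X over F if and only if det_{n,k}(A(|d]) · det(B) = sgn(d) for every k-element subset d of {1,...,n}. -/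
/-!
`det_{n,k}` is an alternating `k`-linear form in the columns of `X`, and
`det_{n,k}(XB) = det_{n,k}(X) · det B` because every `k × k` minor of `XB` is the corresponding
minor of `X` times `det B`. Hence `X ↦ det_{n,k}(AXB)` is the alternating form
`det B · det_{n,k}(A ·)`, and two alternating forms agree as soon as they agree on strictly
increasing tuples of standard basis vectors `e_{i_1}, …, e_{i_k}`, i.e. on the `k`-subsets `d`.
On such a tuple the two forms take the values `det_{n,k}(A(|d]) · det B` and
`det_{n,k}(I(|d]) = sgn(d)`: the only nonzero maximal minor of `I(|d]` is the one on the rows `d`.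
-/

open Finset Matrix

section General

variable {n k : ℕ}

lemma Fin.val_le_val_apply_of_strictMono {f : Fin k → Fin n} (hf : StrictMono f) (j : Fin k) :
    (j : ℕ) ≤ f j := by
  simpa using card_le_card_of_injOn f (s := Iio j) (t := Iio (f j))
    (fun i hi => by simpa using hf (by simpa using hi)) hf.injective.injOn

lemma Fin.sum_val_sub_val_of_strictMono {f : Fin k → Fin n} (hf : StrictMono f) :
    ∑ j : Fin k, ((f j : ℕ) - j) = ∑ j : Fin k, (f j : ℕ) - ∑ j : Fin k, (j : ℕ) :=
  sum_tsub_distrib _ fun j _ => Fin.val_le_val_apply_of_strictMono hf j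

lemma Finset.sum_orderEmbOfFin {α M : Type*} [LinearOrder α] [AddCommMonoid M] (s : Finset α)
    (h : s.card = k) (φ : α → M) : ∑ j : Fin k, φ (s.orderEmbOfFin h j) = ∑ a ∈ s, φ a := by
  conv_rhs => rw [← map_orderEmbOfFin_univ s h, sum_map]
  rfl

lemma forall_strictMono_iff_forall_orderEmbOfFin {α : Type*} [LinearOrder α]
    {P : (Fin k → α) → Prop} :
    (∀ f : Fin k → α, StrictMono f → P f) ↔
      ∀ (s : Finset α) (h : s.card = k), P (fun j => s.orderEmbOfFin h j) := by
  refine ⟨fun hP s h => hP _ (s.orderEmbOfFin h).strictMono, fun hP f hf => ?_⟩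
  have h : (univ.image f).card = k := by
    rw [card_image_of_injective _ hf.injective, card_univ, Fintype.card_fin]
  have hf' := orderEmbOfFin_unique h (fun j => mem_image_of_mem f (mem_univ j)) hf
  simpa only [← hf'] using hP _ h

lemma AlternatingMap.sum_apply {R M N ι α : Type*} [Semiring R] [AddCommMonoid M] [Module R M]
    [AddCommMonoid N] [Module R N] (s : Finset α) (f : α → M [⋀^ι]→ₗ[R] N) (v : ι → M) :
    (∑ a ∈ s, f a) v = ∑ a ∈ s, f a v :=
  map_sum (⟨⟨fun g : M [⋀^ι]→ₗ[R] N => g v, rfl⟩, fun _ _ => rfl⟩ : (M [⋀^ι]→ₗ[R] N) →+ N) f s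

theorem Module.Basis.ext_alternating_of_strictMono {ι R M N : Type*} [LinearOrder ι]
    [CommSemiring R] [AddCommMonoid M] [AddCommGroup N] [Module R M] [Module R N]
    {f g : M [⋀^Fin k]→ₗ[R] N} (e : Basis ι R M)
    (h : ∀ v : Fin k → ι, StrictMono v → f (e ∘ v) = g (e ∘ v)) : f = g := by
  refine e.ext_alternating fun v hv => ?_
  have hsorted : StrictMono (v ∘ Tuple.sort v) :=
    (Tuple.monotone_sort v).strictMono_of_injective (hv.comp (Tuple.sort v).injective)
  rw [f.map_congr_perm _ (Tuple.sort v), g.map_congr_perm _ (Tuple.sort v)]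
  exact congrArg _ (h _ hsorted)

lemma Matrix.col_mul_eq_mulVec {l m o R : Type*} [Fintype m] [NonUnitalNonAssocSemiring R]
    (A : Matrix l m R) (X : Matrix m o R) (j : o) : (A * X).col j = A *ᵥ X.col j := by
  ext i; simp [mul_apply, mulVec, dotProduct]

lemma Matrix.det_one_submatrix_eq_zero_of_strictMono {R α : Type*} [CommRing R] [LinearOrder α]
    {f g : Fin k → α} (hf : StrictMono f) (hg : StrictMono g) (hfg : f ≠ g) :
    ((1 : Matrix α α R).submatrix f g).det = 0 := by
  obtain ⟨i, hi⟩ : ∃ i, f i ∉ Set.range g := by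
    by_contra! hsub
    have himage : univ.image f = univ.image g := by
      refine eq_of_subset_of_card_le (fun a ha => ?_) ?_
      · obtain ⟨i, -, rfl⟩ := mem_image.mp ha
        obtain ⟨j, hj⟩ := hsub i
        exact hj ▸ mem_image_of_mem g (mem_univ j)
      · rw [card_image_of_injective _ hf.injective, card_image_of_injective _ hg.injective]
    exact hfg ((hf.range_inj hg).mp (by simpa using congrArg ((↑) : Finset α → Set α) himage))
  exact det_eq_zero_of_row_eq_zero i fun j => one_apply_ne fun h => hi ⟨j, h.symm⟩

end General

section CullisDet

variable {F : Type*} [Field F] {n k : ℕ}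

open Classical in
noncomputable def cullisDetAlternating : (Fin n → F) [⋀^Fin k]→ₗ[F] F :=
  ∑ f : Fin k → Fin n, if StrictMono f then
    (-1 : F) ^ (∑ j : Fin k, ((f j : ℕ) - (j : ℕ))) •
      detRowAlternating.compLinearMap (LinearMap.funLeft F F f)
  else 0

lemma cullisDetAlternating_col (X : Matrix (Fin n) (Fin k) F) :
    cullisDetAlternating X.col = cullisDet X := by
  rw [cullisDetAlternating, AlternatingMap.sum_apply, cullisDet]
  refine sum_congr rfl fun f _ => ?_
  split_ifs
  · rw [← det_transpose]; rfl
  · rfl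

lemma cullisDet_mul_right (X : Matrix (Fin n) (Fin k) F) (B : Matrix (Fin k) (Fin k) F) :
    cullisDet (X * B) = cullisDet X * B.det := by
  simp only [cullisDet, sum_mul, ite_mul, zero_mul, mul_assoc, ← det_mul,
    submatrix_mul X B _ id id Function.bijective_id, submatrix_id_id]

lemma cullisDetAlternating_mulVec_basisFun (M : Matrix (Fin n) (Fin n) F) (g : Fin k → Fin n) :
    cullisDetAlternating (fun j => M *ᵥ Pi.basisFun F (Fin n) (g j)) =
      cullisDet (M.submatrix id g) := by
  rw [← cullisDetAlternating_col]
  congr 1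
  ext j i; simp

lemma cullisDet_one_submatrix {g : Fin k → Fin n} (hg : StrictMono g) :
    cullisDet ((1 : Matrix (Fin n) (Fin n) F).submatrix id g) =
      (-1 : F) ^ (∑ j : Fin k, ((g j : ℕ) - (j : ℕ))) := by
  rw [cullisDet, sum_eq_single g]
  · rw [if_pos hg, submatrix_submatrix, Function.id_comp, Function.comp_id,
      submatrix_one _ hg.injective, det_one, mul_one]
  · intro f _ hfg
    split_ifs with hf
    · rw [submatrix_submatrix, Function.id_comp, Function.comp_id,
        det_one_submatrix_eq_zero_of_strictMono hf hg hfg, mul_zero]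
    · rfl
  · exact fun h => absurd (mem_univ g) h

lemma cullisDetAlternating_basisFun_comp {g : Fin k → Fin n} (hg : StrictMono g) :
    cullisDetAlternating (Pi.basisFun F (Fin n) ∘ g) =
      (-1 : F) ^ (∑ j : Fin k, ((g j : ℕ) - (j : ℕ))) := by
  rw [← cullisDet_one_submatrix hg, ← cullisDetAlternating_mulVec_basisFun]
  simp only [one_mulVec, Function.comp_def]

lemma cullisDet_mul_mul_eq_iff (A : Matrix (Fin n) (Fin n) F) (B : Matrix (Fin k) (Fin k) F) :
    (∀ X : Matrix (Fin n) (Fin k) F, cullisDet (A * X * B) = cullisDet X) ↔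
      ∀ g : Fin k → Fin n, StrictMono g →
        cullisDet (A.submatrix id g) * B.det = (-1 : F) ^ (∑ j : Fin k, ((g j : ℕ) - (j : ℕ))) := by
  set T := B.det • cullisDetAlternating.compLinearMap (mulVecLin A)
  have hT : ∀ X : Matrix (Fin n) (Fin k) F, T X.col = cullisDet (A * X * B) := by
    intro X
    simp only [T, AlternatingMap.smul_apply, AlternatingMap.compLinearMap_apply, mulVecLin_apply,
      ← col_mul_eq_mulVec, cullisDetAlternating_col, cullisDet_mul_right, smul_eq_mul, mul_comm]
  have hT_basis : ∀ g : Fin k → Fin n,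
      T (Pi.basisFun F (Fin n) ∘ g) = cullisDet (A.submatrix id g) * B.det := by
    intro g
    rw [AlternatingMap.smul_apply, AlternatingMap.compLinearMap_apply, smul_eq_mul, mul_comm]
    exact congrArg (· * B.det) (cullisDetAlternating_mulVec_basisFun A g)
  calc (∀ X : Matrix (Fin n) (Fin k) F, cullisDet (A * X * B) = cullisDet X)
      ↔ T = cullisDetAlternating := by
        refine ⟨fun h => AlternatingMap.ext fun v => ?_, fun h X => ?_⟩
        · simpa only [← hT, ← cullisDetAlternating_col, of_col] using h (of v)ᵀ
        · rw [← hT, h, cullisDetAlternating_col]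
    _ ↔ _ := by
        refine ⟨fun h g hg => ?_, fun h => ?_⟩
        · rw [← hT_basis, h, cullisDetAlternating_basisFun_comp hg]
        · refine (Pi.basisFun F (Fin n)).ext_alternating_of_strictMono fun g hg => ?_
          rw [hT_basis, h g hg, cullisDetAlternating_basisFun_comp hg]

end CullisDet

theorem stmt19_general {F : Type*} [Field F] {n k : ℕ}
    (A : Matrix (Fin n) (Fin n) F) (B : Matrix (Fin k) (Fin k) F) :
    (∀ X : Matrix (Fin n) (Fin k) F, cullisDet (A * X * B) = cullisDet X) ↔
      ∀ (d : Finset (Fin n)) (hd : d.card = k),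
        cullisDet (A.submatrix id (fun j => d.orderEmbOfFin hd j)) * B.det =
          (-1 : F) ^ ((∑ i ∈ d, (i : ℕ)) - ∑ j : Fin k, (j : ℕ)) := by
  rw [cullisDet_mul_mul_eq_iff, forall_strictMono_iff_forall_orderEmbOfFin]
  refine forall₂_congr fun d hd => ?_
  rw [Fin.sum_val_sub_val_of_strictMono (d.orderEmbOfFin hd).strictMono,
    sum_orderEmbOfFin d hd (fun i => (i : ℕ))]

/-- Lemma 2.18: a two-sided multiplication `X ↦ AXB` preserves the Cullis
determinant iff `det_{n,k}(A(|d]) ⬝ det(B) = sgn(d)` for every `k`-subset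
`d` of rows. -/
theorem stmt19 {F : Type*} [Field F] {n k : ℕ} (hk : 1 ≤ k) (hkn : k ≤ n)
    (A : Matrix (Fin n) (Fin n) F) (B : Matrix (Fin k) (Fin k) F) :
    (∀ X : Matrix (Fin n) (Fin k) F, cullisDet (A * X * B) = cullisDet X) ↔
      ∀ (d : Finset (Fin n)) (hd : d.card = k),
        cullisDet (A.submatrix id (fun j => d.orderEmbOfFin hd j)) * B.det =
          (-1 : F) ^ ((∑ i ∈ d, (i : ℕ)) - ∑ j : Fin k, (j : ℕ)) :=
  stmt19_general A B
end
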